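/- Let X be a real normed space, Y a real Banach space, and ψ : X × X → [0, ∞) a function such that the series ∑_{i=0}^∞ 2^i ψ(0, 2^{-i-1} x) converges for all x in X and lim_{n→∞} 2^n ψ(2^{-n} x, 2^{-n} y) = 0 for all x, y in X. If f : X → Y is an odd function satisfying ‖D_f(x,y)‖ ≤ ψ(x,y) for all x, y in X, then the limit A(x) = lim_{n→∞} 2^n f(2^{-n} x) exists for all x in X, and A : X → Y is a unique additive function satisfying ‖f(x) - A(x)‖ ≤ ∑_{i=0}^∞ 2^i ψ(0, 2^{-i-1} x) for all x in X. -/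

import Mathlib

open Filter Topology

/-- The quartic functional equation:
`Q(2x+y) + Q(2x-y) = 4(Q(x+y) + Q(x-y)) + 24 Q(x) - 6 Q(y)`. -/
def IsQuartic {X Y : Type*} [AddCommGroup X] [Module ℝ X] [AddCommGroup Y] [Module ℝ Y]
    (f : X → Y) : Prop :=
  ∀ x y : X,
    f ((2 : ℝ) • x + y) + f ((2 : ℝ) • x - y) =
      (4 : ℝ) • (f (x + y) + f (x - y)) + (24 : ℝ) • f x - (6 : ℝ) • f y

/-- The difference operator
`D_f(x,y) = 7[f(2x+y) + f(2x-y)] - 28[f(x+y) + f(x-y)] + 3[f(2y) - 2f(y)] - 14[f(2x) - 4f(x)]`. -/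
def Dmap {X Y : Type*} [AddCommGroup X] [Module ℝ X] [AddCommGroup Y] [Module ℝ Y]
    (f : X → Y) (x y : X) : Y :=
  (7 : ℝ) • (f ((2 : ℝ) • x + y) + f ((2 : ℝ) • x - y))
    - (28 : ℝ) • (f (x + y) + f (x - y))
    + (3 : ℝ) • (f ((2 : ℝ) • y) - (2 : ℝ) • f y)
    - (14 : ℝ) • (f ((2 : ℝ) • x) - (4 : ℝ) • f x)

/-!
Putting `x = 0` in `D_f` and using oddness gives `‖f (2y) - 2 f y‖ ≤ ψ(0, y)`, so consecutive
terms of `2ⁿ f(2⁻ⁿ x)` differ by at most the `n`-th term of the series: the sequence is Cauchy and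
its limit `A` lies within the sum of the series from `f`. The limit is odd and doubling,
`A(2x) = 2A(x)`, and `D_A = 0` because `D` commutes with the rescaling and
`2ⁿ ψ(2⁻ⁿx, 2⁻ⁿy) → 0`. For a doubling map `D_A = 0` reads
`A(2x+y) + A(2x-y) = 4(A(x+y) + A(x-y)) - 4A(x)`, and for odd `A` seven instances of this identity
combine linearly into additivity. Two doubling maps within the same bound of `f` differ at `x` by
at most `2ⁿ` times twice the bound at `2⁻ⁿx`, a tail of the series, hence they agree.
-/

section Algebra

variable {X Y : Type*} [AddCommGroup X] [Module ℝ X] [AddCommGroup Y] [Module ℝ Y]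

theorem dmap_zero_left {f : X → Y} (hodd : f.Odd) (y : X) :
    Dmap f 0 y = (3 : ℝ) • (f ((2 : ℝ) • y) - (2 : ℝ) • f y) := by
  have := IsAddTorsionFree.of_isTorsionFree ℝ Y
  simp only [Dmap, smul_zero, zero_add, zero_sub, hodd y, hodd.map_zero]
  module

theorem dmap_comp_smul (f : X → Y) (c s : ℝ) (x y : X) :
    Dmap (fun z => c • f (s • z)) x y = c • Dmap f (s • x) (s • y) := by
  simp only [Dmap, smul_add, smul_sub, smul_comm s (2 : ℝ)]
  module

theorem dmap_eq_of_map_two_smul {A : X → Y} (h2 : ∀ x, A ((2 : ℝ) • x) = (2 : ℝ) • A x)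
    (x y : X) :
    Dmap A x y = (7 : ℝ) • (A ((2 : ℝ) • x + y) + A ((2 : ℝ) • x - y)
      - ((4 : ℝ) • (A (x + y) + A (x - y)) - (4 : ℝ) • A x)) := by
  simp only [Dmap, h2]
  module

section Reduced

variable {A : X → Y} (hodd : A.Odd) (h2 : ∀ x, A ((2 : ℝ) • x) = (2 : ℝ) • A x)
  (hP : ∀ x y, A ((2 : ℝ) • x + y) + A ((2 : ℝ) • x - y)
    = (4 : ℝ) • (A (x + y) + A (x - y)) - (4 : ℝ) • A x)
include hodd h2 hP

theorem map_two_smul_add_add_map_add_two_smul_add (x y : X) :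
    A ((2 : ℝ) • x + y) + A (x + (2 : ℝ) • y) + A (x + y) = (4 : ℝ) • (A x + A y) := by
  have E1 := hP x (x + y)
  rw [show (2 : ℝ) • x + (x + y) = (3 : ℝ) • x + y by module,
    show (2 : ℝ) • x - (x + y) = x - y by module, show x + (x + y) = (2 : ℝ) • x + y by module,
    show x - (x + y) = -y by module, hodd] at E1
  have E2 := hP y (y + x)
  rw [show (2 : ℝ) • y + (y + x) = x + (3 : ℝ) • y by module,
    show (2 : ℝ) • y - (y + x) = -(x - y) by module, show y + (y + x) = x + (2 : ℝ) • y by module,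
    show y - (y + x) = -x by module, hodd, hodd] at E2
  have E3 := hP (x + y) (x - y)
  rw [show (2 : ℝ) • (x + y) + (x - y) = (3 : ℝ) • x + y by module,
    show (2 : ℝ) • (x + y) - (x - y) = x + (3 : ℝ) • y by module,
    show x + y + (x - y) = (2 : ℝ) • x by module, show x + y - (x - y) = (2 : ℝ) • y by module,
    h2, h2] at E3
  -- the values at `3x + y` and `x + 3y` cancel
  linear_combination (norm := module) (-4⁻¹ : ℝ) • (E1 + E2 - E3)

theorem two_smul_map_two_smul_add_add_map_add_two_smul (x y : X) :
    (2 : ℝ) • (A ((2 : ℝ) • x + y) + A (x + (2 : ℝ) • y))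
      = (9 : ℝ) • A (x + y) - (3 : ℝ) • (A x + A y) := by
  have E1 := hP x ((2 : ℝ) • y)
  rw [← smul_add, ← smul_sub, h2, h2] at E1
  have E2 := hP y x
  rw [show (2 : ℝ) • y + x = x + (2 : ℝ) • y by module,
    show (2 : ℝ) • y - x = -(x - (2 : ℝ) • y) by module, add_comm y x,
    show y - x = -(x - y) by module, hodd, hodd] at E2
  have E3 := hP y ((2 : ℝ) • x)
  rw [show (2 : ℝ) • y + (2 : ℝ) • x = (2 : ℝ) • (x + y) by module,
    show (2 : ℝ) • y - (2 : ℝ) • x = -((2 : ℝ) • (x - y)) by module,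
    show y + (2 : ℝ) • x = (2 : ℝ) • x + y by module,
    show y - (2 : ℝ) • x = -((2 : ℝ) • x - y) by module, hodd, hodd, h2, h2] at E3
  have E4 := hP x y
  -- `E1, E2` give `A (x ± 2y)` and `E3, E4` give `A (2x ± y)` in terms of `A (x ± y)`, `A x`, `A y`
  linear_combination (norm := module) (-4⁻¹ : ℝ) • E1 + E2 + (-4⁻¹ : ℝ) • E3 + E4

theorem map_add_of_map_two_smul_add_add_map_two_smul_sub (x y : X) :
    A (x + y) = A x + A y := by
  have e₁ := map_two_smul_add_add_map_add_two_smul_add hodd h2 hP x y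
  have e₂ := two_smul_map_two_smul_add_add_map_add_two_smul hodd h2 hP x y
  linear_combination (norm := module) (11⁻¹ : ℝ) • ((2 : ℝ) • e₁ - e₂)

end Reduced

theorem map_add_of_dmap_eq_zero {A : X → Y} (hodd : A.Odd)
    (h2 : ∀ x, A ((2 : ℝ) • x) = (2 : ℝ) • A x) (hD : ∀ x y, Dmap A x y = 0) (x y : X) :
    A (x + y) = A x + A y := by
  refine map_add_of_map_two_smul_add_add_map_two_smul_sub hodd h2 (fun x y => ?_) x y
  have h := dmap_eq_of_map_two_smul h2 x y
  rw [hD, eq_comm, smul_eq_zero_iff_right (by norm_num), sub_eq_zero] at h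
  exact h

noncomputable def dyadicRescale (f : X → Y) (n : ℕ) (x : X) : Y :=
  (2 : ℝ) ^ n • f ((2 : ℝ) ^ (-(n : ℤ)) • x)

theorem two_smul_two_zpow_neg_sub_one_smul (n : ℕ) (x : X) :
    (2 : ℝ) • (2 : ℝ) ^ (-(n : ℤ) - 1) • x = (2 : ℝ) ^ (-(n : ℤ)) • x := by
  rw [smul_smul, ← zpow_one_add₀ two_ne_zero, add_sub_cancel]

theorem dyadicRescale_sub_succ (f : X → Y) (n : ℕ) (x : X) :
    dyadicRescale f n x - dyadicRescale f (n + 1) x = (2 : ℝ) ^ n •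
      (f ((2 : ℝ) • (2 : ℝ) ^ (-(n : ℤ) - 1) • x)
        - (2 : ℝ) • f ((2 : ℝ) ^ (-(n : ℤ) - 1) • x)) := by
  rw [two_smul_two_zpow_neg_sub_one_smul, dyadicRescale, dyadicRescale, pow_succ, mul_smul,
    Nat.cast_succ, neg_add, ← sub_eq_add_neg, smul_sub]

theorem dyadicRescale_succ_two_smul (f : X → Y) (n : ℕ) (x : X) :
    dyadicRescale f (n + 1) ((2 : ℝ) • x) = (2 : ℝ) • dyadicRescale f n x := by
  have harg : (2 : ℝ) ^ (-((n + 1 : ℕ) : ℤ)) • (2 : ℝ) • x = (2 : ℝ) ^ (-(n : ℤ)) • x := by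
    rw [smul_comm, Nat.cast_succ, neg_add, ← sub_eq_add_neg, two_smul_two_zpow_neg_sub_one_smul]
  rw [dyadicRescale, dyadicRescale, harg, pow_succ', mul_smul]

theorem dyadicRescale_neg {f : X → Y} (hodd : f.Odd) (n : ℕ) (x : X) :
    dyadicRescale f n (-x) = -dyadicRescale f n x := by
  simp only [dyadicRescale, smul_neg, hodd _]

theorem map_two_pow_smul {A : X → Y} (h2 : ∀ x, A ((2 : ℝ) • x) = (2 : ℝ) • A x) (n : ℕ)
    (x : X) : A ((2 : ℝ) ^ n • x) = (2 : ℝ) ^ n • A x := by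
  induction n with
  | zero => simp
  | succ n ih => rw [pow_succ', mul_smul, h2, ih, ← mul_smul, ← pow_succ']

theorem dyadicRescale_eq_self {A : X → Y} (h2 : ∀ x, A ((2 : ℝ) • x) = (2 : ℝ) • A x) (n : ℕ)
    (x : X) : dyadicRescale A n x = A x := by
  rw [dyadicRescale, ← map_two_pow_smul h2, smul_smul, ← zpow_natCast, ← zpow_add₀ two_ne_zero,
    add_neg_cancel, zpow_zero, one_smul]

theorem dmap_dyadicRescale (f : X → Y) (n : ℕ) (x y : X) :
    Dmap (dyadicRescale f n) x y
      = (2 : ℝ) ^ n • Dmap f ((2 : ℝ) ^ (-(n : ℤ)) • x) ((2 : ℝ) ^ (-(n : ℤ)) • y) :=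
  dmap_comp_smul f _ _ x y

end Algebra

section Limits

variable {X : Type*} [AddCommGroup X] [Module ℝ X]

theorem tendsto_dmap {Y : Type*} [AddCommGroup Y] [Module ℝ Y] [TopologicalSpace Y]
    [IsTopologicalAddGroup Y] [ContinuousConstSMul ℝ Y] {ι : Type*} {l : Filter ι}
    {F : ι → X → Y} {A : X → Y}
    (hF : ∀ x, Tendsto (fun i => F i x) l (𝓝 (A x))) (x y : X) :
    Tendsto (fun i => Dmap (F i) x y) l (𝓝 (Dmap A x y)) :=
  ((((hF _).add (hF _)).const_smul (7 : ℝ)).sub (((hF _).add (hF _)).const_smul (28 : ℝ))).add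
      (((hF _).sub ((hF y).const_smul (2 : ℝ))).const_smul (3 : ℝ)) |>.sub
    (((hF _).sub ((hF x).const_smul (4 : ℝ))).const_smul (14 : ℝ))

theorem map_two_smul_of_tendsto_dyadicRescale {Y : Type*} [AddCommGroup Y] [Module ℝ Y]
    [TopologicalSpace Y] [ContinuousConstSMul ℝ Y] [T2Space Y] {f A : X → Y}
    (hA : ∀ x, Tendsto (fun n => dyadicRescale f n x) atTop (𝓝 (A x))) (x : X) :
    A ((2 : ℝ) • x) = (2 : ℝ) • A x :=
  tendsto_nhds_unique ((hA _).comp (tendsto_add_atTop_nat 1)) <| by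
    simpa only [Function.comp_def, dyadicRescale_succ_two_smul] using (hA x).const_smul (2 : ℝ)

theorem odd_of_tendsto_dyadicRescale {Y : Type*} [AddCommGroup Y] [Module ℝ Y]
    [TopologicalSpace Y] [ContinuousNeg Y] [T2Space Y] {f A : X → Y} (hodd : f.Odd)
    (hA : ∀ x, Tendsto (fun n => dyadicRescale f n x) atTop (𝓝 (A x))) : A.Odd := fun x =>
  tendsto_nhds_unique (hA (-x)) <| by simpa only [dyadicRescale_neg hodd] using (hA x).neg

end Limits

section Normed

variable {X Y : Type*} [AddCommGroup X] [Module ℝ X] [NormedAddCommGroup Y] [NormedSpace ℝ Y]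
  {f : X → Y}

theorem norm_map_two_smul_sub_le {ψ : X → X → ℝ} (hodd : f.Odd)
    (hD : ∀ x y, ‖Dmap f x y‖ ≤ ψ x y) (y : X) :
    ‖f ((2 : ℝ) • y) - (2 : ℝ) • f y‖ ≤ ψ 0 y := by
  have h := hD 0 y
  rw [dmap_zero_left hodd, norm_smul, Real.norm_ofNat] at h
  linarith [norm_nonneg (f ((2 : ℝ) • y) - (2 : ℝ) • f y)]

theorem dmap_eq_zero_of_tendsto_dyadicRescale {ψ : X → X → ℝ} {A : X → Y}
    (hD : ∀ x y, ‖Dmap f x y‖ ≤ ψ x y)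
    (hA : ∀ x, Tendsto (fun n => dyadicRescale f n x) atTop (𝓝 (A x))) {x y : X}
    (hlim : Tendsto (fun n : ℕ =>
      (2 : ℝ) ^ n * ψ ((2 : ℝ) ^ (-(n : ℤ)) • x) ((2 : ℝ) ^ (-(n : ℤ)) • y)) atTop (𝓝 0)) :
    Dmap A x y = 0 := by
  refine tendsto_nhds_unique (tendsto_dmap hA x y) ?_
  rw [tendsto_zero_iff_norm_tendsto_zero]
  refine squeeze_zero (fun n => norm_nonneg _) (fun n => ?_) hlim
  rw [dmap_dyadicRescale, norm_smul, norm_pow, Real.norm_ofNat]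
  exact mul_le_mul_of_nonneg_left (hD _ _) (by positivity)

section Approximation

variable {φ : X → ℝ} (hf : ∀ y, ‖f ((2 : ℝ) • y) - (2 : ℝ) • f y‖ ≤ φ y)
include hf

theorem dist_dyadicRescale_succ_le (n : ℕ) (x : X) :
    dist (dyadicRescale f n x) (dyadicRescale f (n + 1) x)
      ≤ (2 : ℝ) ^ n * φ ((2 : ℝ) ^ (-(n : ℤ) - 1) • x) := by
  rw [dist_eq_norm, dyadicRescale_sub_succ, norm_smul, norm_pow, Real.norm_ofNat]
  exact mul_le_mul_of_nonneg_left (hf _) (by positivity)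

theorem cauchySeq_dyadicRescale {x : X}
    (hsum : Summable fun i : ℕ => (2 : ℝ) ^ i * φ ((2 : ℝ) ^ (-(i : ℤ) - 1) • x)) :
    CauchySeq fun n => dyadicRescale f n x :=
  cauchySeq_of_dist_le_of_summable _ (dist_dyadicRescale_succ_le hf · x) hsum

theorem norm_sub_le_tsum_of_tendsto_dyadicRescale {x : X}
    (hsum : Summable fun i : ℕ => (2 : ℝ) ^ i * φ ((2 : ℝ) ^ (-(i : ℤ) - 1) • x))
    {L : Y} (hL : Tendsto (fun n => dyadicRescale f n x) atTop (𝓝 L)) :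
    ‖f x - L‖ ≤ ∑' i : ℕ, (2 : ℝ) ^ i * φ ((2 : ℝ) ^ (-(i : ℤ) - 1) • x) := by
  simpa [dyadicRescale, dist_eq_norm] using
    dist_le_tsum_of_dist_le_of_tendsto₀ _ (dist_dyadicRescale_succ_le hf · x) hsum hL

end Approximation

theorem two_pow_mul_tsum_eq_tsum_nat_add (φ : X → ℝ) (n : ℕ) (x : X) :
    (2 : ℝ) ^ n
        * ∑' i : ℕ, (2 : ℝ) ^ i * φ ((2 : ℝ) ^ (-(i : ℤ) - 1) • (2 : ℝ) ^ (-(n : ℤ)) • x)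
      = ∑' i : ℕ, (2 : ℝ) ^ (i + n) * φ ((2 : ℝ) ^ (-((i + n : ℕ) : ℤ) - 1) • x) := by
  rw [← tsum_mul_left]
  congr 1
  funext i
  rw [smul_smul, ← zpow_add₀ two_ne_zero, pow_add]
  push_cast
  ring_nf

theorem eq_of_norm_sub_le_tsum {φ : X → ℝ} {A A' : X → Y}
    (h2 : ∀ x, A ((2 : ℝ) • x) = (2 : ℝ) • A x) (h2' : ∀ x, A' ((2 : ℝ) • x) = (2 : ℝ) • A' x)
    (hA : ∀ x, ‖f x - A x‖ ≤ ∑' i : ℕ, (2 : ℝ) ^ i * φ ((2 : ℝ) ^ (-(i : ℤ) - 1) • x))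
    (hA' : ∀ x, ‖f x - A' x‖ ≤ ∑' i : ℕ, (2 : ℝ) ^ i * φ ((2 : ℝ) ^ (-(i : ℤ) - 1) • x)) :
    A = A' := by
  funext x
  rw [← sub_eq_zero, ← norm_le_zero_iff]
  have htail := (tendsto_sum_nat_add
    fun i : ℕ => (2 : ℝ) ^ i * φ ((2 : ℝ) ^ (-(i : ℤ) - 1) • x)).const_mul 2
  rw [mul_zero] at htail
  refine ge_of_tendsto' htail fun n => ?_
  set z := (2 : ℝ) ^ (-(n : ℤ)) • x
  calc ‖A x - A' x‖ = (2 : ℝ) ^ n * ‖A z - A' z‖ := by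
        rw [← dyadicRescale_eq_self h2 n x, ← dyadicRescale_eq_self h2' n x, dyadicRescale,
          dyadicRescale, ← smul_sub, norm_smul, norm_pow, Real.norm_ofNat]
    _ ≤ (2 : ℝ) ^ n * (2 * ∑' i : ℕ, (2 : ℝ) ^ i * φ ((2 : ℝ) ^ (-(i : ℤ) - 1) • z)) := by
        gcongr
        linarith [norm_sub_le_norm_sub_add_norm_sub (A z) (f z) (A' z), norm_sub_rev (A z) (f z),
          hA z, hA' z]
    _ = _ := by rw [mul_left_comm, two_pow_mul_tsum_eq_tsum_nat_add]

end Normed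

theorem odd_stability'_general {X Y : Type*} [NormedAddCommGroup X] [NormedSpace ℝ X]
    [NormedAddCommGroup Y] [NormedSpace ℝ Y] [CompleteSpace Y]
    (ψ : X → X → ℝ)
    (hsum : ∀ x : X, Summable fun i : ℕ => (2 : ℝ) ^ i * ψ 0 ((2 : ℝ) ^ (-(i : ℤ) - 1) • x))
    (hlim : ∀ x y : X,
      Tendsto (fun n : ℕ =>
        (2 : ℝ) ^ n * ψ ((2 : ℝ) ^ (-(n : ℤ)) • x) ((2 : ℝ) ^ (-(n : ℤ)) • y)) atTop (𝓝 0))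
    (f : X → Y) (hodd : ∀ x : X, f (-x) = -f x)
    (hD : ∀ x y : X, ‖Dmap f x y‖ ≤ ψ x y) :
    ∃ A : X → Y,
      (∀ x : X,
        Tendsto (fun n : ℕ => (2 : ℝ) ^ n • f ((2 : ℝ) ^ (-(n : ℤ)) • x)) atTop (𝓝 (A x))) ∧
      (∀ x y : X, A (x + y) = A x + A y) ∧
      (∀ x : X, ‖f x - A x‖ ≤ ∑' i : ℕ, (2 : ℝ) ^ i * ψ 0 ((2 : ℝ) ^ (-(i : ℤ) - 1) • x)) ∧
      ∀ A' : X → Y, (∀ x y : X, A' (x + y) = A' x + A' y) →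
        (∀ x : X, ‖f x - A' x‖ ≤ ∑' i : ℕ, (2 : ℝ) ^ i * ψ 0 ((2 : ℝ) ^ (-(i : ℤ) - 1) • x)) →
        A' = A := by
  have hf := norm_map_two_smul_sub_le hodd hD
  choose A hA using fun x => cauchySeq_tendsto_of_complete (cauchySeq_dyadicRescale hf (hsum x))
  have hA2 := map_two_smul_of_tendsto_dyadicRescale hA
  have hDA : ∀ x y, Dmap A x y = 0 := fun x y =>
    dmap_eq_zero_of_tendsto_dyadicRescale hD hA (hlim x y)
  have hbound := fun x => norm_sub_le_tsum_of_tendsto_dyadicRescale hf (hsum x) (hA x)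
  refine ⟨A, hA, map_add_of_dmap_eq_zero (odd_of_tendsto_dyadicRescale hodd hA) hA2 hDA, hbound,
    fun A' hA' hbound' => eq_of_norm_sub_le_tsum (fun x => ?_) hA2 hbound' hbound⟩
  rw [two_smul, two_smul, hA']

theorem odd_stability' {X Y : Type*} [NormedAddCommGroup X] [NormedSpace ℝ X]
    [NormedAddCommGroup Y] [NormedSpace ℝ Y] [CompleteSpace Y]
    (ψ : X → X → ℝ) (hψ : ∀ x y : X, 0 ≤ ψ x y)
    (hsum : ∀ x : X, Summable fun i : ℕ => (2 : ℝ) ^ i * ψ 0 ((2 : ℝ) ^ (-(i : ℤ) - 1) • x))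
    (hlim : ∀ x y : X,
      Tendsto (fun n : ℕ =>
        (2 : ℝ) ^ n * ψ ((2 : ℝ) ^ (-(n : ℤ)) • x) ((2 : ℝ) ^ (-(n : ℤ)) • y)) atTop (𝓝 0))
    (f : X → Y) (hodd : ∀ x : X, f (-x) = -f x)
    (hD : ∀ x y : X, ‖Dmap f x y‖ ≤ ψ x y) :
    ∃ A : X → Y,
      (∀ x : X,
        Tendsto (fun n : ℕ => (2 : ℝ) ^ n • f ((2 : ℝ) ^ (-(n : ℤ)) • x)) atTop (𝓝 (A x))) ∧
      (∀ x y : X, A (x + y) = A x + A y) ∧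
      (∀ x : X, ‖f x - A x‖ ≤ ∑' i : ℕ, (2 : ℝ) ^ i * ψ 0 ((2 : ℝ) ^ (-(i : ℤ) - 1) • x)) ∧
      ∀ A' : X → Y, (∀ x y : X, A' (x + y) = A' x + A' y) →
        (∀ x : X, ‖f x - A' x‖ ≤ ∑' i : ℕ, (2 : ℝ) ^ i * ψ 0 ((2 : ℝ) ^ (-(i : ℤ) - 1) • x)) →
        A' = A :=
  odd_stability'_general ψ hsum hlim f hodd hD
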